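/- Biane's map σ ↦ (μ, λ), where μ_i = U if i < σ(i), L if i = σ(i), D if i > σ(i), and for each i with μ_i = D, λ_i = |{j ≥ i : σ(j) ≤ σ(i)}|, is a bijection from involutions in S_n to labeled Motzkin paths of length n, i.e., pairs (μ, λ) of a Motzkin path μ with a label λ_i ∈ {1,...,h_i(μ)} on each down step, where h_i(μ) is the height of the i-th step. -/

import Mathlib

/-!
A down step `i` of an involution `σ` closes the arc `(σ i, i)`. Among the arcs open over `i`,
i.e. with `u < i ≤ σ u`, the label of `i` is the rank of `σ i`; since there are at most
`h_i` such arcs, the label lies in `{1, …, h_i}`, and the path is Motzkin because arcs are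
matched pairs `U … D`. Conversely, reading a labelled Motzkin path from left to right and closing
at every down step `i` the `λ_i`-th smallest still open up step builds an involution whose
open arcs over `i` are exactly the up steps still open at time `i`; the height bound makes the
choice possible and the Motzkin condition leaves no up step open at the end. Injectivity follows
by induction along the down steps: the arcs open over `i` only depend on `σ` at earlier down
steps, and the label picks `σ i` among them.
-/

open Finset

/-- Steps of a Motzkin path: up, level, down. -/
inductive Step | U | L | D
deriving DecidableEq

instance instFintypeStep : Fintype Step :=
  ⟨{Step.U, Step.L, Step.D}, by intro x; cases x <;> simp⟩

/-- `μ` is a Motzkin path: every prefix has at least as many `U`'s as `D`'s, and the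
total numbers of `U`'s and `D`'s agree. -/
def IsMotzkin {n : ℕ} (μ : Fin n → Step) : Prop :=
  (∀ k : Fin n, (Finset.univ.filter (fun j => j ≤ k ∧ μ j = Step.D)).card
      ≤ (Finset.univ.filter (fun j => j ≤ k ∧ μ j = Step.U)).card)
  ∧ (Finset.univ.filter (fun j => μ j = Step.U)).card
    = (Finset.univ.filter (fun j => μ j = Step.D)).card

/-- The height of the `i`-th step of `μ`: the larger of the two `y`-coordinates of
the step, i.e. `#{j ≤ i : μ j = U} − #{j < i : μ j = D}`. -/
def height {n : ℕ} (μ : Fin n → Step) (i : Fin n) : ℕ :=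
  (Finset.univ.filter (fun j => j ≤ i ∧ μ j = Step.U)).card
    - (Finset.univ.filter (fun j => j < i ∧ μ j = Step.D)).card

/-- Biane's word of an involution: `U` if `i < σ i`, `L` if `i = σ i`, `D` if `i > σ i`. -/
def bpath {n : ℕ} (σ : Equiv.Perm (Fin n)) (i : Fin n) : Step :=
  if i < σ i then Step.U else if σ i = i then Step.L else Step.D

/-- Biane's label of step `i`: `|{j ≥ i : σ j ≤ σ i}|`. -/
def blabel {n : ℕ} (σ : Equiv.Perm (Fin n)) (i : Fin n) : ℕ :=
  (Finset.univ.filter (fun j => i ≤ j ∧ σ j ≤ σ i)).card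

namespace Finset

variable {α : Type*} [LinearOrder α] (s : Finset α)

def rank (x : α) : ℕ := #{y ∈ s | y ≤ x}

variable {s}

lemma rank_lt_rank {x y : α} (hy : y ∈ s) (hxy : x < y) : s.rank x < s.rank y := by
  refine card_lt_card ((ssubset_iff_of_subset fun z hz => ?_).2 ⟨y, ?_, ?_⟩)
  · simp only [mem_filter] at hz ⊢
    exact ⟨hz.1, hz.2.trans hxy.le⟩
  · simp [hy]
  · simp [hxy]

lemma rank_injOn : Set.InjOn s.rank s := by
  intro x hx y hy hxy
  rcases lt_trichotomy x y with h | h | h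
  · exact absurd hxy (rank_lt_rank hy h).ne
  · exact h
  · exact absurd hxy (rank_lt_rank hx h).ne'

lemma rank_mem_Icc {x : α} (hx : x ∈ s) : s.rank x ∈ Icc 1 #s :=
  mem_Icc.2 ⟨card_pos.2 ⟨x, by simp [hx]⟩, card_filter_le _ _⟩

lemma exists_rank_eq {r : ℕ} (hr : r ∈ Icc 1 #s) : ∃ x ∈ s, s.rank x = r :=
  surjOn_of_injOn_of_card_le _ (fun _ => rank_mem_Icc) rank_injOn (by simp) hr

variable (s)

-- `d` is a junk value, returned when `r ∉ [1, #s]`.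
open scoped Classical in
noncomputable def kthSmallest (r : ℕ) (d : α) : α :=
  if h : ∃ x ∈ s, s.rank x = r then h.choose else d

variable {s}

lemma kthSmallest_mem_or_eq (r : ℕ) (d : α) :
    s.kthSmallest r d ∈ s ∨ s.kthSmallest r d = d := by
  unfold kthSmallest
  split_ifs with h
  exacts [Or.inl h.choose_spec.1, Or.inr rfl]

lemma kthSmallest_mem {r : ℕ} (hr : r ∈ Icc 1 #s) (d : α) : s.kthSmallest r d ∈ s := by
  rw [kthSmallest, dif_pos (exists_rank_eq hr)]
  exact (exists_rank_eq hr).choose_spec.1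

lemma rank_kthSmallest {r : ℕ} (hr : r ∈ Icc 1 #s) (d : α) :
    s.rank (s.kthSmallest r d) = r := by
  rw [kthSmallest, dif_pos (exists_rank_eq hr)]
  exact (exists_rank_eq hr).choose_spec.2

end Finset

open Equiv

lemma Equiv.Perm.apply_apply_of_mul_self_eq_one {α : Type*} {σ : Perm α} (hσ : σ * σ = 1)
    (x : α) : σ (σ x) = x := by
  simpa using congr($hσ x)

lemma Equiv.Perm.card_filter_apply_lt_eq {α : Type*} [LinearOrder α] [Fintype α] {σ : Perm α}
    (hσ : σ * σ = 1) (P : α → Prop) [DecidablePred P] :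
    #{x | P x ∧ σ x < x} = #{x | x < σ x ∧ P (σ x)} := by
  have hσσ := σ.apply_apply_of_mul_self_eq_one hσ
  refine card_nbij' σ σ ?_ ?_ (fun x _ => hσσ x) (fun x _ => hσσ x) <;>
    intro x hx <;> simp_all

open Equiv.Perm

variable {n : ℕ}

section Path

variable {σ : Perm (Fin n)} {i : Fin n}

lemma bpath_eq_U_iff : bpath σ i = .U ↔ i < σ i := by
  unfold bpath; split_ifs <;> simp_all

lemma bpath_eq_L_iff : bpath σ i = .L ↔ σ i = i := by
  unfold bpath; split_ifs with h₁ h₂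
  exacts [by simp [h₁.ne'], by simp [h₂], by simp [h₂]]

lemma bpath_eq_D_iff : bpath σ i = .D ↔ σ i < i := by
  unfold bpath; split_ifs with h₁ h₂
  exacts [by simp [h₁.not_gt], by simp [h₂], by simp [lt_of_le_of_ne (not_lt.1 h₁) h₂]]

end Path

def stepCount (μ : Fin n → Step) (s : Step) (k : ℕ) : ℕ :=
  #{j : Fin n | (j : ℕ) < k ∧ μ j = s}

lemma height_eq_of_eq_D {μ : Fin n → Step} {i : Fin n} (hi : μ i = .D) :
    height μ i = stepCount μ .U i - stepCount μ .D i := by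
  have hU : ∀ j, j ≤ i ∧ μ j = .U ↔ (j : ℕ) < i ∧ μ j = .U := fun j => by
    rw [Fin.val_fin_lt, le_iff_lt_or_eq]
    constructor
    · rintro ⟨h | rfl, hj⟩ <;> simp_all
    · exact fun h => ⟨.inl h.1, h.2⟩
  simp only [height, stepCount, hU, Fin.val_fin_lt]

lemma IsMotzkin.stepCount_U_eq {μ : Fin n → Step} (hμ : IsMotzkin μ) :
    stepCount μ .U n = stepCount μ .D n := by
  simpa [stepCount] using hμ.2

section Involution

variable {σ : Perm (Fin n)} (hσ : σ * σ = 1)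
include hσ

lemma isMotzkin_bpath : IsMotzkin (bpath σ) := by
  simp only [IsMotzkin, bpath_eq_U_iff, bpath_eq_D_iff]
  refine ⟨fun k => ?_, ?_⟩
  · rw [card_filter_apply_lt_eq hσ (· ≤ k)]
    exact card_le_card fun u hu => by
      simp only [mem_filter, mem_univ, true_and] at hu ⊢
      exact ⟨hu.1.le.trans hu.2, hu.1⟩
  · simpa using (card_filter_apply_lt_eq hσ fun _ => True).symm

def arcsOver (σ : Perm (Fin n)) (i : Fin n) : Finset (Fin n) := {u | u < i ∧ i ≤ σ u}

lemma apply_mem_arcsOver {i : Fin n} (hi : σ i < i) : σ i ∈ arcsOver σ i := by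
  simp [arcsOver, hi, apply_apply_of_mul_self_eq_one hσ]

lemma blabel_eq_rank {i : Fin n} (hi : σ i < i) : blabel σ i = (arcsOver σ i).rank (σ i) := by
  have hσσ := apply_apply_of_mul_self_eq_one hσ
  refine card_nbij' σ σ ?_ ?_ (fun x _ => hσσ x) (fun x _ => hσσ x) <;> intro x hx
  · simp only [coe_filter, mem_filter, mem_univ, true_and, arcsOver, Set.mem_ofPred_eq] at hx ⊢
    exact ⟨⟨hx.2.trans_lt hi, by rw [hσσ]; exact hx.1⟩, hx.2⟩
  · simp only [coe_filter, mem_filter, mem_univ, true_and, arcsOver, Set.mem_ofPred_eq] at hx ⊢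
    exact ⟨hx.1.2, by rw [hσσ]; exact hx.2⟩

lemma card_arcsOver_add_stepCount_le (i : Fin n) :
    #(arcsOver σ i) + stepCount (bpath σ) .D i ≤ stepCount (bpath σ) .U i := by
  simp only [stepCount, bpath_eq_U_iff, bpath_eq_D_iff, Fin.val_fin_lt]
  rw [card_filter_apply_lt_eq hσ (· < i), ← card_union_of_disjoint]
  · refine card_le_card fun u hu => ?_
    simp only [arcsOver, mem_union, mem_filter, mem_univ, true_and] at hu ⊢
    rcases hu with ⟨hui, hiu⟩ | ⟨huσ, hσi⟩
    exacts [⟨hui, hui.trans_le hiu⟩, ⟨huσ.trans hσi, huσ⟩]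
  · simp only [arcsOver, disjoint_left, mem_filter, mem_univ, true_and]
    exact fun u hu hu' => hu.2.not_gt hu'.2

lemma blabel_le_height {i : Fin n} (hi : bpath σ i = .D) :
    blabel σ i ≤ height (bpath σ) i := by
  rw [height_eq_of_eq_D hi, blabel_eq_rank hσ (bpath_eq_D_iff.1 hi)]
  have := card_arcsOver_add_stepCount_le hσ i
  have := card_filter_le (arcsOver σ i) (· ≤ σ i)
  simp only [rank] at *
  omega

end Involution

lemma one_le_blabel (σ : Perm (Fin n)) (i : Fin n) : 1 ≤ blabel σ i :=
  card_pos.2 ⟨i, by simp⟩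

section Injective

variable {σ τ : Perm (Fin n)} (hσ : σ * σ = 1) (hτ : τ * τ = 1)
  (hpath : bpath σ = bpath τ)
include hσ hτ hpath

lemma apply_eq_of_agree_on_down_steps {u : Fin n} (hu : σ u < u → σ u = τ u)
    (hσu : u < σ u → σ (σ u) = τ (σ u)) : σ u = τ u := by
  rcases lt_trichotomy (σ u) u with h | h | h
  · exact hu h
  · rw [h, eq_comm, ← bpath_eq_L_iff, ← hpath, bpath_eq_L_iff, h]
  · have hu' := hσu h
    rw [apply_apply_of_mul_self_eq_one hσ] at hu'
    calc σ u = τ (τ (σ u)) := (apply_apply_of_mul_self_eq_one hτ _).symm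
      _ = τ u := by rw [← hu']

lemma eq_of_bpath_eq_of_blabel_eq (hlabel : ∀ i, σ i < i → blabel σ i = blabel τ i) :
    σ = τ := by
  have hD : ∀ e, σ e < e ↔ τ e < e := fun e => by
    rw [← bpath_eq_D_iff, hpath, bpath_eq_D_iff]
  have hσσ := apply_apply_of_mul_self_eq_one hσ
  have hdown : ∀ d, σ d < d → σ d = τ d := by
    intro d
    induction d using WellFoundedLT.induction with | _ d ih
    intro hd
    have ih' : ∀ e < d, τ e < e → τ e = σ e := fun e he h => (ih e he ((hD e).2 h)).symm
    have hlt : ∀ u < d, σ u < d ↔ τ u < d := fun u hu => by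
      constructor <;> intro h
      · rwa [← apply_eq_of_agree_on_down_steps hσ hτ hpath (ih u hu) fun h' =>
          ih _ h (by rwa [hσσ])]
      · rwa [← apply_eq_of_agree_on_down_steps hτ hσ hpath.symm (ih' u hu) fun h' =>
          ih' _ h (by rwa [apply_apply_of_mul_self_eq_one hτ])]
    have harcs : arcsOver σ d = arcsOver τ d := by
      ext u
      simp only [arcsOver, mem_filter, mem_univ, true_and, and_congr_right_iff]
      intro hu
      rw [← not_lt, ← not_lt, hlt u hu]
    have hτd := (hD d).1 hd
    refine rank_injOn (apply_mem_arcsOver hσ hd) (harcs ▸ apply_mem_arcsOver hτ hτd) ?_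
    rw [← blabel_eq_rank hσ hd, harcs, ← blabel_eq_rank hτ hτd, hlabel d hd]
  exact Equiv.ext fun j =>
    apply_eq_of_agree_on_down_steps hσ hτ hpath (hdown j) fun h => hdown _ (by rwa [hσσ])

end Injective

lemma Equiv.Perm.mul_swap_mul_self {α : Type*} [DecidableEq α] {π : Perm α} (hπ : π * π = 1)
    {a b : α} (ha : π a = a) (hb : π b = b) : π * swap a b * (π * swap a b) = 1 := by
  have hc : π * swap a b = swap a b * π := by rw [mul_swap_eq_swap_mul, ha, hb]
  rw [mul_assoc, ← mul_assoc (swap a b), ← hc, mul_assoc, swap_mul_self, mul_one, hπ]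

namespace Biane

variable (μ : Fin n → Step) (lab : Fin n → ℕ)

def openUps (π : Perm (Fin n)) (k : ℕ) : Finset (Fin n) :=
  {u | (u : ℕ) < k ∧ μ u = .U ∧ π u = u}

-- When the label of a down step `i` is out of range, the junk value `i` makes the swap below
-- trivial.
noncomputable def partner (π : Perm (Fin n)) (i : Fin n) : Fin n :=
  if μ i = .D then (openUps μ π i).kthSmallest (lab i) i else i

noncomputable def partialInvolution : ℕ → Perm (Fin n)
  | 0 => 1
  | k + 1 =>
    if h : k < n then
      partialInvolution k * swap (partner μ lab (partialInvolution k) ⟨k, h⟩) ⟨k, h⟩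
    else partialInvolution k

structure IsPartialMatching (π : Perm (Fin n)) (k : ℕ) : Prop where
  mul_self : π * π = 1
  apply_of_le : ∀ j : Fin n, k ≤ j → π j = j
  up_down : ∀ j, j < π j → μ j = .U ∧ μ (π j) = .D
  down_lt : ∀ j : Fin n, (j : ℕ) < k → μ j = .D → π j < j

variable {μ lab}

lemma partialInvolution_succ {k : ℕ} (hk : k < n) :
    partialInvolution μ lab (k + 1) = partialInvolution μ lab k *
      swap (partner μ lab (partialInvolution μ lab k) ⟨k, hk⟩) ⟨k, hk⟩ := by
  rw [partialInvolution, dif_pos hk]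

lemma apply_partner {π : Perm (Fin n)} {i : Fin n} (hi : π i = i) :
    π (partner μ lab π i) = partner μ lab π i := by
  unfold partner
  split_ifs
  · rcases kthSmallest_mem_or_eq (s := openUps μ π i) (lab i) i with h | h
    · exact (mem_filter.1 h).2.2.2
    · rw [h, hi]
  · exact hi

namespace IsPartialMatching

variable {π : Perm (Fin n)}

section

variable {k : ℕ} (h : IsPartialMatching μ π k)
include h

lemma apply_lt_of_apply_ne {j : Fin n} (hj : π j ≠ j) : (π j : ℕ) < k := by
  by_contra hle
  have := h.apply_of_le _ (not_lt.1 hle)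
  rw [apply_apply_of_mul_self_eq_one h.mul_self] at this
  exact hj this.symm

-- An up step before `k` is either open or matched by `π` with a down step before `k`.
lemma card_openUps_add_stepCount :
    #(openUps μ π k) + stepCount μ .D k = stepCount μ .U k := by
  have hσσ := apply_apply_of_mul_self_eq_one h.mul_self
  have hmatched : ({u : Fin n | (u : ℕ) < k ∧ μ u = .U ∧ π u ≠ u} : Finset (Fin n))
      = ({u : Fin n | u < π u ∧ (π u : ℕ) < k} : Finset (Fin n)) := by
    ext u
    simp only [mem_filter, mem_univ, true_and]
    constructor
    · rintro ⟨hu, hU, hne⟩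
      refine ⟨(lt_or_gt_of_ne hne).resolve_left fun hlt => ?_, h.apply_lt_of_apply_ne hne⟩
      have := (h.up_down (π u) (by rwa [hσσ])).2
      rw [hσσ, hU] at this
      exact Step.noConfusion this
    · rintro ⟨hlt, hk⟩
      exact ⟨(Fin.val_fin_lt.2 hlt).trans hk, (h.up_down u hlt).1, hlt.ne'⟩
  have hdown : ({d : Fin n | (d : ℕ) < k ∧ π d < d} : Finset (Fin n))
      = ({d : Fin n | (d : ℕ) < k ∧ μ d = .D} : Finset (Fin n)) := by
    ext d
    simp only [mem_filter, mem_univ, true_and, and_congr_right_iff]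
    refine fun hd => ⟨fun hlt => ?_, h.down_lt d hd⟩
    simpa [hσσ] using (h.up_down (π d) (by rwa [hσσ])).2
  rw [stepCount, ← hdown, card_filter_apply_lt_eq h.mul_self, ← hmatched, stepCount,
    ← card_filter_add_card_filter_not (s := {j : Fin n | (j : ℕ) < k ∧ μ j = .U})
      (fun u => π u = u), filter_filter, filter_filter]
  simp only [openUps, and_assoc, ne_eq]

end

lemma mem_Icc_card_openUps {i : Fin n} (h : IsPartialMatching μ π i) (hD : μ i = .D) {r : ℕ}
    (hr : 1 ≤ r ∧ r ≤ height μ i) : r ∈ Icc 1 #(openUps μ π i) := by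
  have hcard := h.card_openUps_add_stepCount
  rw [height_eq_of_eq_D hD] at hr
  exact mem_Icc.2 ⟨hr.1, by omega⟩

lemma partner_mem_openUps {i : Fin n} (h : IsPartialMatching μ π i) (hD : μ i = .D)
    (hlab : 1 ≤ lab i ∧ lab i ≤ height μ i) : partner μ lab π i ∈ openUps μ π i := by
  rw [partner, if_pos hD]
  exact kthSmallest_mem (h.mem_Icc_card_openUps hD hlab) i

lemma mul_swap_partner_apply_of_ne {i j : Fin n} (h : IsPartialMatching μ π i) (hj : π j ≠ j) :
    (π * swap (partner μ lab π i) i) j = π j := by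
  have hi := h.apply_of_le i le_rfl
  rw [Perm.mul_apply, swap_apply_of_ne_of_ne]
  · rintro rfl
    exact hj (apply_partner hi)
  · rintro rfl
    exact hj hi

lemma succ_of_ne_D {i : Fin n} (h : IsPartialMatching μ π i) (hD : μ i ≠ .D) :
    IsPartialMatching μ π (i + 1) := by
  refine ⟨h.mul_self, fun j hj => h.apply_of_le j (by omega), h.up_down, fun j hj hjD => ?_⟩
  have hji : j ≠ i := by rintro rfl; exact hD hjD
  exact h.down_lt j (by have := Fin.val_ne_of_ne hji; omega) hjD

lemma mul_swap {i u : Fin n} (h : IsPartialMatching μ π i) (hu : u ∈ openUps μ π i)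
    (hD : μ i = .D) : IsPartialMatching μ (π * swap u i) (i + 1) := by
  obtain ⟨hui, hU, hπu⟩ : (u : ℕ) < i ∧ μ u = .U ∧ π u = u := by
    simpa [openUps] using hu
  have hπi : π i = i := h.apply_of_le i le_rfl
  have happly : ∀ j, j ≠ u → j ≠ i → (π * swap u i) j = π j := fun j h₁ h₂ => by
    rw [Perm.mul_apply, swap_apply_of_ne_of_ne h₁ h₂]
  have hu' : (π * swap u i) u = i := by rw [Perm.mul_apply, swap_apply_left, hπi]
  have hi' : (π * swap u i) i = u := by rw [Perm.mul_apply, swap_apply_right, hπu]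
  refine ⟨mul_swap_mul_self h.mul_self hπu hπi, fun j hj => ?_, fun j hj => ?_,
    fun j hj hjD => ?_⟩
  · rw [happly j (Fin.ne_of_val_ne (by omega)) (Fin.ne_of_val_ne (by omega)),
      h.apply_of_le j (by omega)]
  · by_cases hju : j = u
    · subst hju
      rw [hu']
      exact ⟨hU, hD⟩
    by_cases hji : j = i
    · subst hji
      rw [hi'] at hj
      exact absurd hj (not_lt.2 (Fin.val_fin_le.1 hui.le))
    rw [happly j hju hji] at hj ⊢
    exact h.up_down j hj
  · by_cases hji : j = i
    · subst hji
      rwa [hi']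
    have hju : j ≠ u := by rintro rfl; rw [hU] at hjD; cases hjD
    rw [happly j hju hji]
    exact h.down_lt j (by have := Fin.val_ne_of_ne hji; omega) hjD

lemma mul_swap_partner {i : Fin n} (h : IsPartialMatching μ π i)
    (hlab : μ i = .D → 1 ≤ lab i ∧ lab i ≤ height μ i) :
    IsPartialMatching μ (π * swap (partner μ lab π i) i) (i + 1) := by
  by_cases hD : μ i = .D
  · exact h.mul_swap (h.partner_mem_openUps hD (hlab hD)) hD
  · rw [partner, if_neg hD, swap_self, ← Perm.one_def, mul_one]
    exact h.succ_of_ne_D hD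

lemma openUps_eq_empty (h : IsPartialMatching μ π n) (hμ : IsMotzkin μ) :
    openUps μ π n = ∅ := by
  have := h.card_openUps_add_stepCount
  rw [hμ.stepCount_U_eq] at this
  exact card_eq_zero.1 (by omega)

lemma bpath_eq (h : IsPartialMatching μ π n) (hμ : IsMotzkin μ) : bpath π = μ := by
  have hσσ := apply_apply_of_mul_self_eq_one h.mul_self
  funext j
  rcases lt_trichotomy (π j) j with hj | hj | hj
  · rw [bpath_eq_D_iff.2 hj]
    simpa [hσσ] using (h.up_down (π j) (by rwa [hσσ])).2.symm
  · rw [bpath_eq_L_iff.2 hj]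
    cases hμj : μ j
    · have : j ∈ openUps μ π n := by simp [openUps, hμj, hj]
      simp [h.openUps_eq_empty hμ] at this
    · rfl
    · exact absurd (h.down_lt j j.2 hμj) (by simp [hj])
  · rw [bpath_eq_U_iff.2 hj, (h.up_down j hj).1]

end IsPartialMatching

section Construction

variable {μ : Fin n → Step} {lab : Fin n → ℕ}
  (hlab : ∀ i, μ i = .D → 1 ≤ lab i ∧ lab i ≤ height μ i)
include hlab

lemma isPartialMatching_partialInvolution {k : ℕ} (hk : k ≤ n) :
    IsPartialMatching μ (partialInvolution μ lab k) k := by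
  induction k with
  | zero => exact ⟨mul_one 1, fun _ _ => rfl, fun _ hj => absurd hj (lt_irrefl _),
      fun _ hj => absurd hj (Nat.not_lt_zero _)⟩
  | succ k ih =>
    rw [partialInvolution_succ hk]
    exact (ih (by omega)).mul_swap_partner (i := ⟨k, hk⟩) (hlab _)

lemma partialInvolution_apply_of_ne {k m : ℕ} (hkm : k ≤ m) (hm : m ≤ n) {j : Fin n}
    (hj : partialInvolution μ lab k j ≠ j) :
    partialInvolution μ lab m j = partialInvolution μ lab k j := by
  induction m, hkm using Nat.le_induction with
  | base => rfl
  | succ m hkm ih =>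
    have hπ := isPartialMatching_partialInvolution hlab (k := m) (by omega)
    rw [partialInvolution_succ hm, ← ih (by omega)]
    exact hπ.mul_swap_partner_apply_of_ne (i := ⟨m, hm⟩) (ih (by omega) ▸ hj)

lemma partialInvolution_apply_of_eq_D {d : Fin n} (hd : μ d = .D) :
    partialInvolution μ lab n d = partner μ lab (partialInvolution μ lab d) d := by
  have hπ := isPartialMatching_partialInvolution hlab d.2.le
  have hlt := (mem_filter.1 (hπ.partner_mem_openUps hd (hlab d hd))).2.1
  have hstep :
      partialInvolution μ lab (d + 1) d = partner μ lab (partialInvolution μ lab d) d := by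
    rw [partialInvolution_succ d.2, Perm.mul_apply, Fin.eta, swap_apply_right,
      apply_partner (hπ.apply_of_le d le_rfl)]
  rw [← hstep]
  exact partialInvolution_apply_of_ne hlab d.2 le_rfl
    (by rw [hstep]; exact Fin.ne_of_val_ne hlt.ne)

variable (hμ : IsMotzkin μ)
include hμ

lemma arcsOver_partialInvolution (d : Fin n) :
    arcsOver (partialInvolution μ lab n) d = openUps μ (partialInvolution μ lab d) d := by
  set σ := partialInvolution μ lab n
  set π := partialInvolution μ lab d
  have hσ := isPartialMatching_partialInvolution hlab le_rfl
  have hπ : IsPartialMatching μ π d := isPartialMatching_partialInvolution hlab d.2.le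
  have hbpath := hσ.bpath_eq hμ
  have hσσ := apply_apply_of_mul_self_eq_one hσ.mul_self
  ext u
  simp only [arcsOver, openUps, mem_filter, mem_univ, true_and, Fin.val_fin_lt]
  constructor
  · rintro ⟨hud, hdu⟩
    refine ⟨hud, by rw [← hbpath, bpath_eq_U_iff]; exact hud.trans_le hdu, ?_⟩
    by_contra hne
    have := hπ.apply_lt_of_apply_ne hne
    rw [← partialInvolution_apply_of_ne hlab d.2.le n.le_refl hne] at this
    exact absurd hdu (not_le.2 this)
  · rintro ⟨hud, hU, hπu⟩
    refine ⟨hud, not_lt.1 fun hσu => ?_⟩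
    have huσ : u < σ u := by rw [← bpath_eq_U_iff, hbpath, hU]
    have hD : μ (σ u) = .D := by rw [← hbpath, bpath_eq_D_iff, hσσ]; exact huσ
    have hπσu : π (σ u) < σ u := hπ.down_lt _ hσu hD
    have hπσu' : π (σ u) = u :=
      (partialInvolution_apply_of_ne hlab d.2.le n.le_refl hπσu.ne).symm.trans (hσσ u)
    have := congrArg π hπσu'
    rw [apply_apply_of_mul_self_eq_one hπ.mul_self, hπu] at this
    exact huσ.ne this.symm

lemma blabel_partialInvolution {d : Fin n} (hd : μ d = .D) :
    blabel (partialInvolution μ lab n) d = lab d := by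
  have hσ := isPartialMatching_partialInvolution hlab le_rfl
  have hπ := isPartialMatching_partialInvolution hlab d.2.le
  rw [blabel_eq_rank hσ.mul_self (bpath_eq_D_iff.1 ((hσ.bpath_eq hμ).symm ▸ hd)),
    arcsOver_partialInvolution hlab hμ d, partialInvolution_apply_of_eq_D hlab hd, partner,
    if_pos hd, rank_kthSmallest (hπ.mem_Icc_card_openUps hd (hlab d hd))]

end Construction

end Biane

/-- Biane's map `σ ↦ (μ, λ)` is a bijection from involutions in `S_n` onto labeled
Motzkin paths of length `n`: pairs of a Motzkin path together with a label
`λ i ∈ {1, …, h_i(μ)}` on every down step (and, as a normalization, label `0`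
elsewhere). -/
theorem biane_bijective (n : ℕ) :
    Set.BijOn
      (fun σ : Equiv.Perm (Fin n) =>
        (bpath σ, fun i => if bpath σ i = Step.D then blabel σ i else 0))
      {σ | σ * σ = 1}
      {p : (Fin n → Step) × (Fin n → ℕ) |
        IsMotzkin p.1
        ∧ (∀ i, p.1 i = Step.D → 1 ≤ p.2 i ∧ p.2 i ≤ height p.1 i)
        ∧ (∀ i, p.1 i ≠ Step.D → p.2 i = 0)} := by
  refine ⟨fun σ hσ => ?_, fun σ hσ τ hτ hστ => ?_, ?_⟩
  · refine ⟨isMotzkin_bpath hσ, fun i hi => ?_, fun i hi => if_neg hi⟩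
    simp only [if_pos hi]
    exact ⟨one_le_blabel σ i, blabel_le_height hσ hi⟩
  · simp only [Prod.mk.injEq] at hστ
    refine eq_of_bpath_eq_of_blabel_eq hσ hτ hστ.1 fun i hi => ?_
    have := congrFun hστ.2 i
    have hD := bpath_eq_D_iff.2 hi
    rwa [← hστ.1, if_pos hD, if_pos hD] at this
  · rintro ⟨μ, lab⟩ ⟨hμ, hlab, hzero⟩
    have hπ := Biane.isPartialMatching_partialInvolution hlab le_rfl
    have hbpath := hπ.bpath_eq hμ
    refine ⟨Biane.partialInvolution μ lab n, hπ.mul_self,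
      Prod.ext hbpath (funext fun i => ?_)⟩
    simp only [hbpath]
    split_ifs with hi
    exacts [Biane.blabel_partialInvolution hlab hμ hi, (hzero i hi).symm]
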